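/- Let A be any subset of the Baire space ωω (equipped with the induced ultrametric) and let Y be a separable metrizable space. If f : A → Y is of Baire class 1, then there is a sequence of full functions f_k : A → Y converging pointwise to f. -/

import Mathlib

open Set Filter Topology Metric

/- The Baire space `ℕ → ℕ` is equipped with the ultrametric
`dist x y = (1/2)^n` (for `x ≠ y`, `n` least with `x n ≠ y n`), and any
`A ⊆ ℕ → ℕ` carries the induced metric. -/
attribute [local instance] PiNat.metricSpaceNatNat

/-- A set is `Fσ` (i.e. `Σ⁰₂`): a countable union of closed sets. -/
def IsFsigma {X : Type*} [TopologicalSpace X] (A : Set X) : Prop :=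
  ∃ F : ℕ → Set X, (∀ n, IsClosed (F n)) ∧ A = ⋃ n, F n

/-- A subset of a metric space is full: for some constant `r > 0`, together with
each of its points it contains the open ball of radius `r` around it. -/
def IsFullSet {X : Type*} [MetricSpace X] (A : Set X) : Prop :=
  ∃ r : ℝ, 0 < r ∧ ∀ x ∈ A, Metric.ball x r ⊆ A

/-- A function is full: it has finitely many values and the preimage of each
value is a full set. -/
def IsFullFun {X Y : Type*} [MetricSpace X] (f : X → Y) : Prop :=
  (Set.range f).Finite ∧ ∀ y ∈ Set.range f, IsFullSet (f ⁻¹' {y})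

/-!
For every `d` the Baire class 1 condition gives a countable closed cover `C d i` of the space on
each piece of which `f` varies by less than `1 / (d + 1)` (preimages of small balls around a
dense sequence are `Fσ`). To evaluate `g k` at `x`, walk greedily down the tree of intersections
`C 0 i₀ ∩ ⋯ ∩ C n iₙ`, at each of `k` levels taking the least index `i ≤ k` for which the
intersection still meets the closed ball of radius `1 / (k + 1)` around `x`, and return `f` at
some point of the final intersection. By the ultrametric inequality this depends only on that
ball, so `g k` is full. As the balls shrink they eventually miss each of the finitely many closed
pieces that precede, at a given level, the first piece containing `x`; so for large `k` the walk
follows the pieces containing `x` down to level `d`, and `g k x` is within `1 / (d + 1)` of `f x`.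
-/

section PathSet

variable {α : Type*} (C : ℕ → ℕ → Set α)

/-- For `s = [iₙ, …, i₀]` (deepest level first), `pathSet C s = C 0 i₀ ∩ ⋯ ∩ C n iₙ`. -/
def pathSet : List ℕ → Set α
  | [] => univ
  | i :: s => C s.length i ∩ pathSet s

variable {C}

theorem pathSet_subset_of_suffix {s t : List ℕ} (h : s <:+ t) : pathSet C t ⊆ pathSet C s := by
  obtain ⟨u, rfl⟩ := h
  induction u with
  | nil => exact subset_rfl
  | cons i u ih => exact inter_subset_right.trans ih

theorem isClosed_pathSet [TopologicalSpace α] (hC : ∀ d i, IsClosed (C d i)) :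
    ∀ s, IsClosed (pathSet C s)
  | [] => isClosed_univ
  | i :: s => (hC _ i).inter (isClosed_pathSet hC s)

theorem reverse_map_range_succ (T : ℕ → ℕ) (d : ℕ) :
    ((List.range (d + 1)).map T).reverse = T d :: ((List.range d).map T).reverse := by
  simp [List.range_succ]

theorem mem_pathSet_reverse_map_range {x : α} {T : ℕ → ℕ} (hT : ∀ d, x ∈ C d (T d)) (d : ℕ) :
    x ∈ pathSet C ((List.range d).map T).reverse := by
  induction d with
  | zero => trivial
  | succ d ih => simpa [reverse_map_range_succ, pathSet] using ⟨hT d, ih⟩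

end PathSet

section Greedy

variable {α : Type*} (C : ℕ → ℕ → Set α) (k : ℕ) (B : Set α)

open Classical in
noncomputable def greedyStep (s : List ℕ) : List ℕ :=
  if h : ∃ i ≤ k, (B ∩ pathSet C (i :: s)).Nonempty then Nat.find h :: s else s

noncomputable def greedyPath (d : ℕ) : List ℕ :=
  (greedyStep C k B)^[d] []

variable {C k B}

theorem greedyStep_eq_self_or (s : List ℕ) :
    greedyStep C k B s = s ∨
      ∃ i ≤ k, (B ∩ pathSet C (i :: s)).Nonempty ∧ greedyStep C k B s = i :: s := by
  classical
  unfold greedyStep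
  split_ifs with h
  exacts [Or.inr ⟨_, (Nat.find_spec h).1, (Nat.find_spec h).2, rfl⟩, Or.inl rfl]

theorem greedyPath_succ (d : ℕ) :
    greedyPath C k B (d + 1) = greedyStep C k B (greedyPath C k B d) :=
  Function.iterate_succ_apply' _ _ _

theorem greedyPath_suffix_of_le {d e : ℕ} (h : d ≤ e) :
    greedyPath C k B d <:+ greedyPath C k B e := by
  induction e, h using Nat.le_induction with
  | base => exact List.suffix_refl _
  | succ e _ ih =>
    rw [greedyPath_succ]
    rcases greedyStep_eq_self_or (greedyPath C k B e) with h | ⟨i, -, -, h⟩ <;> rw [h]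
    exacts [ih, ih.trans (List.suffix_cons _ _)]

theorem greedyPath_mem (d : ℕ) :
    greedyPath C k B d ∈ {s : List ℕ | s.length ≤ d ∧ ∀ j ∈ s, j ≤ k} := by
  induction d with
  | zero => simp [greedyPath]
  | succ d ih =>
    obtain ⟨hlen, hle⟩ := ih
    rw [greedyPath_succ]
    rcases greedyStep_eq_self_or (greedyPath C k B d) with h | ⟨i, hik, -, h⟩ <;> rw [h]
    · exact ⟨hlen.trans d.le_succ, hle⟩
    · exact ⟨by simpa using hlen, by simpa using ⟨hik, hle⟩⟩

theorem nonempty_pathSet_greedyPath [Nonempty α] (d : ℕ) :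
    (pathSet C (greedyPath C k B d)).Nonempty := by
  induction d with
  | zero => exact univ_nonempty
  | succ d ih =>
    rw [greedyPath_succ]
    rcases greedyStep_eq_self_or (greedyPath C k B d) with h | ⟨i, -, hne, h⟩ <;> rw [h]
    exacts [ih, hne.mono inter_subset_right]

theorem greedyStep_eq_cons {s : List ℕ} {i : ℕ} (hik : i ≤ k)
    (hmem : (B ∩ pathSet C (i :: s)).Nonempty)
    (hlt : ∀ j < i, Disjoint B (pathSet C (j :: s))) :
    greedyStep C k B s = i :: s := by
  have h : ∃ i ≤ k, (B ∩ pathSet C (i :: s)).Nonempty := ⟨i, hik, hmem⟩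
  classical
  rw [greedyStep, dif_pos h, (Nat.find_eq_iff h).2 ⟨⟨hik, hmem⟩, fun j hj ⟨_, y, hyB, hyP⟩ =>
    disjoint_left.1 (hlt j hj) hyB hyP⟩]

end Greedy

theorem finite_setOf_length_le_forall_mem_le (n k : ℕ) :
    {s : List ℕ | s.length ≤ n ∧ ∀ j ∈ s, j ≤ k}.Finite := by
  refine ((List.finite_length_le (Iic k) n).image (List.map Subtype.val)).subset ?_
  rintro s ⟨hlen, hs⟩
  lift s to List (Iic k) using hs
  exact ⟨s, by simpa using hlen, rfl⟩

theorem isFullFun_of_isEmpty {X Y : Type*} [MetricSpace X] [IsEmpty X] (g : X → Y) :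
    IsFullFun g := by
  simp [IsFullFun, range_eq_empty]

theorem isFullFun_of_finite_range {X Y : Type*} [MetricSpace X] {g : X → Y}
    (hfin : (range g).Finite) {r : ℝ} (hr : 0 < r) (hg : ∀ x y, dist x y < r → g x = g y) :
    IsFullFun g :=
  ⟨hfin, fun _ _ => ⟨r, hr, fun x hx y hy => (hg x y (mem_ball'.1 hy)).symm.trans hx⟩⟩

theorem eventually_closedBall_one_div_subset {X : Type*} [PseudoMetricSpace X] {x : X}
    {U : Set X} (hU : U ∈ 𝓝 x) : ∀ᶠ k : ℕ in atTop, closedBall x (1 / ((k : ℝ) + 1)) ⊆ U :=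
  ((tendsto_closedBall_smallSets x).comp tendsto_one_div_add_atTop_nhds_zero_nat).eventually
    (eventually_smallSets_subset.2 hU)

theorem eventually_greedyPath_eq {α : Type*} [PseudoMetricSpace α] {C : ℕ → ℕ → Set α}
    {x : α} (hclosed : ∀ d i, IsClosed (C d i)) {T : ℕ → ℕ} (hT : ∀ d, x ∈ C d (T d))
    (hTmin : ∀ d, ∀ i < T d, x ∉ C d i) (d : ℕ) :
    ∀ᶠ k in atTop, greedyPath C k (closedBall x (1 / ((k : ℝ) + 1))) d =
      ((List.range d).map T).reverse := by
  induction d with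
  | zero => exact Eventually.of_forall fun _ => rfl
  | succ d ih =>
    set P := ((List.range d).map T).reverse
    have hfar : ∀ᶠ k : ℕ in atTop, ∀ i < T d,
        Disjoint (closedBall x (1 / ((k : ℝ) + 1))) (pathSet C (i :: P)) := by
      refine (eventually_all_finite (finite_Iio (T d))).2 fun i hi => ?_
      have hx : x ∉ pathSet C (i :: P) :=
        fun hx => hTmin d i hi (by simpa [P, pathSet] using hx.1)
      exact (eventually_closedBall_one_div_subset
        ((isClosed_pathSet hclosed _).isOpen_compl.mem_nhds hx)).mono
        fun _ => subset_compl_iff_disjoint_right.1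
    filter_upwards [ih, hfar, eventually_ge_atTop (T d)] with k hk hfar hkT
    rw [greedyPath_succ, hk, reverse_map_range_succ, greedyStep_eq_cons hkT ?_ hfar]
    exact ⟨x, mem_closedBall_self Nat.one_div_pos_of_nat.le,
      by simpa [P, reverse_map_range_succ] using mem_pathSet_reverse_map_range hT (d + 1)⟩

section GreedyApprox

variable {α Y : Type*} [MetricSpace α] [Nonempty α] (C : ℕ → ℕ → Set α) (f : α → Y)

noncomputable def greedyApprox (k : ℕ) (x : α) : Y :=
  f (Classical.epsilon (· ∈ pathSet C (greedyPath C k (closedBall x (1 / ((k : ℝ) + 1))) k)))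

theorem isFullFun_greedyApprox [IsUltrametricDist α] (k : ℕ) :
    IsFullFun (greedyApprox C f k) := by
  refine isFullFun_of_finite_range (r := 1 / ((k : ℝ) + 1)) ?_ Nat.one_div_pos_of_nat
    fun x y hxy => ?_
  · refine ((finite_setOf_length_le_forall_mem_le k k).image
      fun s => f (Classical.epsilon (· ∈ pathSet C s))).subset ?_
    rintro _ ⟨x, rfl⟩
    exact ⟨_, greedyPath_mem k, rfl⟩
  · rw [greedyApprox, greedyApprox,
      IsUltrametricDist.closedBall_eq_of_mem (mem_closedBall'.2 hxy.le)]

variable {C f}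

theorem tendsto_greedyApprox [PseudoMetricSpace Y]
    (hclosed : ∀ d i, IsClosed (C d i)) (hcover : ∀ d x, ∃ i, x ∈ C d i)
    (hosc : ∀ d i, ∀ z ∈ C d i, ∀ z' ∈ C d i, dist (f z) (f z') < 1 / ((d : ℝ) + 1))
    (x : α) : Tendsto (fun k => greedyApprox C f k x) atTop (𝓝 (f x)) := by
  classical
  let T d := Nat.find (hcover d x)
  have hT d : x ∈ C d (T d) := Nat.find_spec (hcover d x)
  have hTmin d : ∀ i < T d, x ∉ C d i := fun _ => Nat.find_min (hcover d x)
  refine Metric.tendsto_nhds.2 fun ε hε => ?_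
  obtain ⟨d, hd⟩ := exists_nat_one_div_lt hε
  filter_upwards [eventually_greedyPath_eq hclosed hT hTmin (d + 1), eventually_ge_atTop (d + 1)]
    with k hk hkd
  rw [reverse_map_range_succ] at hk
  have hsuf : T d :: ((List.range d).map T).reverse <:+
      greedyPath C k (closedBall x (1 / ((k : ℝ) + 1))) k := hk ▸ greedyPath_suffix_of_le hkd
  have hw := (pathSet_subset_of_suffix hsuf
    (Classical.epsilon_spec (nonempty_pathSet_greedyPath k))).1
  rw [List.length_reverse, List.length_map, List.length_range] at hw
  exact (hosc d (T d) _ hw x (hT d)).trans hd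

end GreedyApprox

theorem exists_isFullFun_tendsto_of_closed_covers {α Y : Type*} [MetricSpace α]
    [IsUltrametricDist α] [Nonempty α] [PseudoMetricSpace Y] {f : α → Y}
    (hcov : ∀ ε > 0, ∃ F : ℕ → Set α, (∀ i, IsClosed (F i)) ∧ (∀ x, ∃ i, x ∈ F i) ∧
      ∀ i, ∀ z ∈ F i, ∀ z' ∈ F i, dist (f z) (f z') < ε) :
    ∃ g : ℕ → α → Y, (∀ k, IsFullFun (g k)) ∧
      ∀ x, Tendsto (fun k => g k x) atTop (𝓝 (f x)) := by
  choose C hclosed hcover hosc using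
    fun d : ℕ => hcov (1 / ((d : ℝ) + 1)) Nat.one_div_pos_of_nat
  exact ⟨greedyApprox C f, isFullFun_greedyApprox C f, tendsto_greedyApprox hclosed hcover hosc⟩

theorem exists_closed_covers_of_isFsigma_preimage {α Y : Type*} [TopologicalSpace α]
    [PseudoMetricSpace Y] [TopologicalSpace.SeparableSpace Y] [Nonempty Y] {f : α → Y}
    (hf : ∀ U : Set Y, IsOpen U → IsFsigma (f ⁻¹' U)) :
    ∀ ε > 0, ∃ F : ℕ → Set α, (∀ i, IsClosed (F i)) ∧ (∀ x, ∃ i, x ∈ F i) ∧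
      ∀ i, ∀ z ∈ F i, ∀ z' ∈ F i, dist (f z) (f z') < ε := by
  intro ε hε
  set u := TopologicalSpace.denseSeq Y
  choose G hGclosed hG using fun j => hf (ball (u j) (ε / 2)) isOpen_ball
  have hball j m : ∀ w ∈ G j m, dist (f w) (u j) < ε / 2 :=
    fun w hw => mem_ball.1 ((hG j).symm.subset (mem_iUnion_of_mem m hw))
  refine ⟨fun n => G n.unpair.1 n.unpair.2, fun n => hGclosed _ _, fun x => ?_,
    fun n z hz z' hz' => ?_⟩
  · obtain ⟨j, hj⟩ := (TopologicalSpace.denseRange_denseSeq Y).exists_dist_lt (f x) (half_pos hε)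
    obtain ⟨m, hm⟩ := mem_iUnion.1 ((hG j).subset (mem_ball.2 hj))
    exact ⟨Nat.pair j m, by simpa using hm⟩
  · linarith [dist_triangle_right (f z) (f z') (u n.unpair.1), hball _ _ z hz, hball _ _ z' hz']

theorem exists_full_sequence_of_baire_one
    {Y : Type*} [TopologicalSpace Y]
    [TopologicalSpace.SeparableSpace Y] [TopologicalSpace.MetrizableSpace Y]
    (A : Set (ℕ → ℕ)) (f : A → Y)
    (hf : ∀ U : Set Y, IsOpen U → IsFsigma (f ⁻¹' U)) :
    ∃ g : ℕ → A → Y, (∀ k, IsFullFun (g k)) ∧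
      ∀ x, Tendsto (fun k => g k x) atTop (𝓝 (f x)) := by
  let : MetricSpace Y := TopologicalSpace.metrizableSpaceMetric Y
  have : IsUltrametricDist (ℕ → ℕ) := ⟨PiNat.dist_triangle_nonarch⟩
  rcases isEmpty_or_nonempty A with hA | hA
  · exact ⟨fun _ => f, fun _ => isFullFun_of_isEmpty f, isEmptyElim⟩
  · have : Nonempty Y := hA.map f
    exact exists_isFullFun_tendsto_of_closed_covers (exists_closed_covers_of_isFsigma_preimage hf)
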